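/- For every bounded operator A : H → K between Hilbert spaces and every ε > 0, there exists a closed subspace V of H such that |A| maps V onto V, A is bounded below on V (i.e., ‖Ax‖ ≥ c‖x‖ on V for some c > 0), and ‖A − A P_V‖ ≤ ε, where P_V is the orthogonal projection onto V. -/

import Mathlib

/-!
Let `G = max (ε - T) 0` in the continuous functional calculus and `V = ker G`, the spectral
subspace of `T` for `[ε, ∞)`. On `V` we have `T = max T ε`, so `‖T x‖ ≥ ε ‖x‖`; on
`Vᗮ = closure (range G)` we have `‖T x‖ ≤ ε ‖x‖`, because `t * max (ε - t) 0 ≤ ε * max (ε - t) 0`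
on the spectrum `t ≥ 0`. Since `G` commutes with `T`, `V` is `T`-invariant, and a self-adjoint
operator that is bounded below on a closed invariant subspace maps it onto itself. As
`‖A x‖ = ‖T x‖`, the bounds transfer to `A`, and `A - A P_V = A P_{Vᗮ}` has norm at most `ε`.
-/

open ContinuousLinearMap

section InnerProductSpace

variable {𝕜 E F : Type*} [RCLike 𝕜] [NormedAddCommGroup E] [InnerProductSpace 𝕜 E]
  [NormedAddCommGroup F] [InnerProductSpace 𝕜 F]

lemma norm_apply_eq_of_comp_self_eq_adjoint_comp [CompleteSpace E] [CompleteSpace F]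
    {A : E →L[𝕜] F} {T : E →L[𝕜] E} (hT : IsSelfAdjoint T) (h : T ∘L T = adjoint A ∘L A)
    (x : E) : ‖A x‖ = ‖T x‖ := by
  have hsq : ‖A x‖ ^ 2 = ‖T x‖ ^ 2 := by
    rw [apply_norm_sq_eq_inner_adjoint_left, apply_norm_sq_eq_inner_adjoint_left,
      hT.adjoint_eq, h]
  exact (pow_left_inj₀ (norm_nonneg _) (norm_nonneg _) two_ne_zero).mp hsq

lemma isClosed_map_of_mul_norm_le [CompleteSpace E] {T : E →L[𝕜] F} {V : Submodule 𝕜 E}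
    (hV : IsClosed (V : Set E)) {c : ℝ} (hc : 0 < c) (hT : ∀ x ∈ V, c * ‖x‖ ≤ ‖T x‖) :
    IsClosed (V.map (T : E →ₗ[𝕜] F) : Set F) := by
  have : CompleteSpace V := hV.completeSpace_coe
  have hanti : AntilipschitzWith (Real.toNNReal c)⁻¹ (T ∘L V.subtypeL) := by
    refine (T ∘L V.subtypeL).antilipschitz_of_bound fun x => ?_
    rw [NNReal.coe_inv, Real.coe_toNNReal _ hc.le, inv_mul_eq_div, le_div_iff₀ hc, mul_comm]
    exact hT x x.2
  convert hanti.isClosed_range (T ∘L V.subtypeL).uniformContinuous using 1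
  rw [Submodule.map_coe, coe_comp, Set.range_comp, Submodule.coe_subtypeL]
  simp

lemma map_eq_of_isSelfAdjoint_of_mul_norm_le [CompleteSpace E] {T : E →L[𝕜] E}
    (hT : IsSelfAdjoint T) {V : Submodule 𝕜 E} (hV : IsClosed (V : Set E))
    (hTV : ∀ x ∈ V, T x ∈ V) {c : ℝ} (hc : 0 < c) (hbdd : ∀ x ∈ V, c * ‖x‖ ≤ ‖T x‖) :
    V.map (T : E →ₗ[𝕜] E) = V := by
  set W := V.map (T : E →ₗ[𝕜] E)
  have : CompleteSpace W := (isClosed_map_of_mul_norm_le hV hc hbdd).completeSpace_coe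
  -- A vector of `V` orthogonal to `T V` is orthogonal to `T (T v)`, hence killed by `T`.
  have hperp : Wᗮ ⊓ V = ⊥ := by
    refine (Submodule.eq_bot_iff _).mpr fun v ⟨hvW, hvV⟩ => ?_
    have hTv : T v = 0 := by
      have h := (Submodule.mem_orthogonal W v).mp hvW _ ⟨T v, hTV v hvV, rfl⟩
      rwa [hT.isSymmetric, coe_coe, inner_self_eq_zero] at h
    have h := hbdd v hvV
    rw [hTv, norm_zero] at h
    exact norm_le_zero_iff.mp (le_of_mul_le_mul_left (by simpa using h) hc)
  calc W = W ⊔ Wᗮ ⊓ V := by rw [hperp, sup_bot_eq]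
    _ = V := Submodule.sup_orthogonal_inf_of_hasOrthogonalProjection
      (Submodule.map_le_iff_le_comap.mpr hTV)

lemma norm_sub_comp_starProjection_le {A : E →L[𝕜] F} {V : Submodule 𝕜 E}
    [V.HasOrthogonalProjection] {ε : ℝ} (hε : 0 ≤ ε) (hA : ∀ z ∈ Vᗮ, ‖A z‖ ≤ ε * ‖z‖) :
    ‖A - A ∘L V.starProjection‖ ≤ ε := by
  refine opNorm_le_bound _ hε fun x => ?_
  have hx : (A - A ∘L V.starProjection) x = A (Vᗮ.starProjection x) := by
    rw [V.starProjection_orthogonal']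
    simp [map_sub]
  rw [hx]
  exact (hA _ (Vᗮ.starProjection_apply_mem x)).trans
    (mul_le_mul_of_nonneg_left (Vᗮ.norm_starProjection_apply_le x) hε)

end InnerProductSpace

section FunctionalCalculus

variable {H : Type*} [NormedAddCommGroup H] [InnerProductSpace ℂ H] [CompleteSpace H]

lemma norm_cfc_apply_le_of_abs_le {T : H →L[ℂ] H} {g h : ℝ → ℝ}
    (hg : ContinuousOn g (spectrum ℝ T)) (hh : ContinuousOn h (spectrum ℝ T))
    (hgh : ∀ t ∈ spectrum ℝ T, |g t| ≤ |h t|) (x : H) :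
    ‖cfc g T x‖ ≤ ‖cfc h T x‖ := by
  have hsq : ∀ f : ℝ → ℝ, ContinuousOn f (spectrum ℝ T) →
      ‖cfc f T x‖ ^ 2 = RCLike.re (inner ℂ (cfc (fun t => f t * f t) T x) x) := by
    intro f hf
    rw [apply_norm_sq_eq_inner_adjoint_left, (cfc_predicate f T).adjoint_eq, cfc_mul f f T]
    rfl
  have hle : cfc (fun t => g t * g t) T ≤ cfc (fun t => h t * h t) T :=
    cfc_mono fun t ht => by
      simpa only [abs_mul_abs_self] using mul_self_le_mul_self (abs_nonneg _) (hgh t ht)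
  have hinner := ((le_def _ _).mp hle).re_inner_nonneg_left x
  rw [sub_apply, inner_sub_left, map_sub, ← hsq g hg, ← hsq h hh, sub_nonneg] at hinner
  exact (pow_le_pow_iff_left₀ (norm_nonneg _) (norm_nonneg _) two_ne_zero).mp hinner

-- For `T ≥ 0` this is the range of the spectral projection `E([ε, ∞))` of `T`.
noncomputable def spectralSubspaceGE (T : H →L[ℂ] H) (ε : ℝ) : Submodule ℂ H :=
  (cfc (fun t => max (ε - t) 0) T).ker

variable (T : H →L[ℂ] H) (ε : ℝ)

lemma isClosed_spectralSubspaceGE : IsClosed (spectralSubspaceGE T ε : Set H) :=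
  isClosed_ker _

variable {T ε}

lemma apply_mem_spectralSubspaceGE (hT : IsSelfAdjoint T) {x : H}
    (hx : x ∈ spectralSubspaceGE T ε) : T x ∈ spectralSubspaceGE T ε := by
  have hcomm := (cfc_commute_cfc (fun t => max (ε - t) 0) id T).eq
  rw [cfc_id ℝ T] at hcomm
  have hx' : cfc (fun t => max (ε - t) 0) T x = 0 := hx
  change cfc (fun t => max (ε - t) 0) T (T x) = 0
  rw [← mul_apply_eq_comp, hcomm, mul_apply_eq_comp, hx', map_zero]

lemma mul_norm_le_norm_apply_of_mem_spectralSubspaceGE (hT : IsSelfAdjoint T) (hε : 0 < ε)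
    {x : H} (hx : x ∈ spectralSubspaceGE T ε) : ε * ‖x‖ ≤ ‖T x‖ := by
  have hconst : cfc (fun _ => ε) T x = ε • x := by
    rw [cfc_const ε T]
    simp
  have hsum : cfc (fun t => t + max (ε - t) 0) T x = T x := by
    have hx' : cfc (fun t => max (ε - t) 0) T x = 0 := hx
    rw [cfc_add T (fun t => t) _, cfc_id' ℝ T, add_apply, hx', add_zero]
  calc ε * ‖x‖ = ‖cfc (fun _ => ε) T x‖ := by rw [hconst, norm_smul, Real.norm_of_nonneg hε.le]
    _ ≤ ‖cfc (fun t => t + max (ε - t) 0) T x‖ :=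
      norm_cfc_apply_le_of_abs_le (by fun_prop) (by fun_prop) (fun t _ => by
        rw [abs_of_pos hε]
        exact le_abs.mpr (Or.inl (by linarith [le_max_left (ε - t) 0]))) x
    _ = ‖T x‖ := by rw [hsum]

lemma norm_apply_le_of_mem_orthogonal_spectralSubspaceGE (hT : T.IsPositive) (hε : 0 ≤ ε)
    {z : H} (hz : z ∈ (spectralSubspaceGE T ε)ᗮ) : ‖T z‖ ≤ ε * ‖z‖ := by
  have hTsa := hT.isSelfAdjoint
  set G := cfc (fun t => max (ε - t) 0) T
  have hGsa : IsSelfAdjoint G := cfc_predicate _ T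
  have hrange : ∀ y, ‖T (G y)‖ ≤ ε * ‖G y‖ := by
    intro y
    have hTG : T (G y) = cfc (fun t => t * max (ε - t) 0) T y := by
      rw [cfc_mul (fun t => t) _ T, cfc_id' ℝ T, mul_apply_eq_comp]
    have hεG : ε • G y = cfc (fun t => ε * max (ε - t) 0) T y := by
      rw [cfc_const_mul ε (fun t => max (ε - t) 0) T, smul_apply]
    rw [← Real.norm_of_nonneg hε, ← norm_smul, hTG, hεG]
    refine norm_cfc_apply_le_of_abs_le (by fun_prop) (by fun_prop) (fun t ht => ?_) y
    have ht0 : 0 ≤ t := spectrum_nonneg_of_nonneg ((nonneg_iff_isPositive T).mpr hT) ht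
    rcases le_total t ε with htε | hεt
    · rw [abs_mul, abs_mul, abs_of_nonneg ht0, abs_of_nonneg hε]
      exact mul_le_mul_of_nonneg_right htε (abs_nonneg _)
    · simp [max_eq_right (sub_nonpos.mpr hεt)]
  have hclosure : z ∈ closure (G.range : Set H) := by
    rw [← Submodule.topologicalClosure_coe]
    rwa [spectralSubspaceGE, orthogonal_ker, hGsa.adjoint_eq] at hz
  refine closure_minimal (t := {w | ‖T w‖ ≤ ε * ‖w‖}) ?_
    (isClosed_le (by fun_prop) (by fun_prop)) hclosure
  rintro _ ⟨y, rfl⟩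
  exact hrange y

end FunctionalCalculus

theorem exists_subspace_modulus_invariant_boundedBelow
    {H K : Type*} [NormedAddCommGroup H] [InnerProductSpace ℂ H] [CompleteSpace H]
    [NormedAddCommGroup K] [InnerProductSpace ℂ K] [CompleteSpace K]
    (A : H →L[ℂ] K) (T : H →L[ℂ] H) (hT : T.IsPositive)
    (hT2 : T ∘L T = (ContinuousLinearMap.adjoint A) ∘L A)
    (ε : ℝ) (hε : 0 < ε) :
    ∃ V : Submodule ℂ H, IsClosed (V : Set H) ∧
      Submodule.map T.toLinearMap V = V ∧
      (∃ c : ℝ, 0 < c ∧ ∀ x ∈ V, c * ‖x‖ ≤ ‖A x‖) ∧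
      ∃ P : H →L[ℂ] H, IsSelfAdjoint P ∧ P ∘L P = P ∧ LinearMap.range (P : H →ₗ[ℂ] H) = V ∧
        ‖A - A ∘L P‖ ≤ ε := by
  have hTsa := hT.isSelfAdjoint
  have hAT := norm_apply_eq_of_comp_self_eq_adjoint_comp hTsa hT2
  set V := spectralSubspaceGE T ε
  have hV := isClosed_spectralSubspaceGE T ε
  have : CompleteSpace V := hV.completeSpace_coe
  have hbdd (x : H) (hx : x ∈ V) : ε * ‖x‖ ≤ ‖T x‖ :=
    mul_norm_le_norm_apply_of_mem_spectralSubspaceGE hTsa hε hx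
  refine ⟨V, hV,
    map_eq_of_isSelfAdjoint_of_mul_norm_le hTsa hV (fun _ => apply_mem_spectralSubspaceGE hTsa)
      hε hbdd,
    ⟨ε, hε, fun x hx => hAT x ▸ hbdd x hx⟩,
    V.starProjection, isSelfAdjoint_starProjection V, V.isIdempotentElem_starProjection.eq,
    V.range_starProjection, norm_sub_comp_starProjection_le hε.le fun z hz => ?_⟩
  rw [hAT]
  exact norm_apply_le_of_mem_orthogonal_spectralSubspaceGE hT hε.le hz
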